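/- arXiv:1912.00151 — 4 statements merged into one kernel-verified Lean document; each statement's English description precedes it below -/
import Mathlib

section
/- For every integer w ≥ 1, all reals a,b,c > 0 and all even natural numbers m and n, the loop partition functions satisfy the supermultiplicative inequality Z_{w,m+n,0}(a,b,c) ≥ Z_{w,m,0}(a,b,c) · Z_{w,n,0}(a,b,c). -/
open Filter
open scoped Classical

noncomputable section

/-- Step value of a Boolean step: `true` is an up step (+1), `false` a down step (−1). -/
def stepVal (x : Bool) : ℤ := if x then 1 else -1

/-- Height of the walk after `k` steps. -/
def ht (σ : ℕ → Bool) (k : ℕ) : ℤ := ∑ i ∈ Finset.range k, stepVal (σ i)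

/-- Extend a finite sequence of steps to `ℕ → Bool`. -/
def extFun {n : ℕ} (σ : Fin n → Bool) : ℕ → Bool :=
  fun i => if h : i < n then σ ⟨i, h⟩ else false

/-- The first `n` steps of `σ` stay in the strip `0 ≤ y ≤ w`. -/
def IsWalk (w n : ℕ) (σ : ℕ → Bool) : Prop :=
  ∀ k ≤ n, 0 ≤ ht σ k ∧ ht σ k ≤ (w : ℤ)

/-- Number of contacts with the bottom wall (excluding the origin):
`m_a(φ) = #{1 ≤ k ≤ n : h_k = 0}`. -/
def ma (n : ℕ) (σ : ℕ → Bool) : ℕ :=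
  ((Finset.Icc 1 n).filter (fun k => ht σ k = 0)).card

/-- Number of contacts with the top wall: `m_b(φ) = #{1 ≤ k ≤ n : h_k = w}`. -/
def mb (w n : ℕ) (σ : ℕ → Bool) : ℕ :=
  ((Finset.Icc 1 n).filter (fun k => ht σ k = (w : ℤ))).card

/-- Number of stiffness points: `m_c(φ) = #{1 ≤ k ≤ n−1 : σ_k = σ_{k+1}}`. -/
def mc (n : ℕ) (σ : ℕ → Bool) : ℕ :=
  ((Finset.range (n - 1)).filter (fun i => σ i = σ (i + 1))).card

/-- Boltzmann weight of a walk: `W(φ) = a^{m_a} b^{m_b} c^{m_c}`. -/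
def wt (w n : ℕ) (a b c : ℝ) (σ : ℕ → Bool) : ℝ :=
  a ^ ma n σ * b ^ mb w n σ * c ^ mc n σ

/-- Partition function `Z_{w,n}(a,b,c)`: sum of weights over all walks of length `n`
in the strip of width `w`. -/
def Z (w n : ℕ) (a b c : ℝ) : ℝ :=
  ∑ σ ∈ Finset.univ.filter (fun σ : Fin n → Bool => IsWalk w n (extFun σ)),
    wt w n a b c (extFun σ)

/-- Fixed-endpoint partition function `Z_{w,n,h}(a,b,c)`: sum over walks of length `n`
in the strip of width `w` ending at height `h`. -/
def Zh (w n h : ℕ) (a b c : ℝ) : ℝ :=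
  ∑ σ ∈ Finset.univ.filter
      (fun σ : Fin n → Bool => IsWalk w n (extFun σ) ∧ ht (extFun σ) n = (h : ℤ)),
    wt w n a b c (extFun σ)

end

section Aux
variable {m n : ℕ} (σ : Fin m → Bool) (τ : Fin n → Bool)

lemma extA_lt {i : ℕ} (h : i < m) : extFun (Fin.append σ τ) i = extFun σ i := by
  unfold extFun
  rw [dif_pos (show i < m + n by omega), dif_pos h]
  exact Fin.append_left σ τ ⟨i, h⟩

lemma extA_ge {i : ℕ} (h : m ≤ i) (h2 : i < m + n) :
    extFun (Fin.append σ τ) i = extFun τ (i - m) := by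
  unfold extFun
  rw [dif_pos h2, dif_pos (show i - m < n by omega)]
  have he : (⟨i, h2⟩ : Fin (m + n)) = Fin.natAdd m ⟨i - m, by omega⟩ := by
    ext; simp; omega
  rw [he, Fin.append_right]

lemma ht_append_left {k : ℕ} (hk : k ≤ m) :
    ht (extFun (Fin.append σ τ)) k = ht (extFun σ) k :=
  Finset.sum_congr rfl fun i hi => by
    rw [extA_lt σ τ (lt_of_lt_of_le (Finset.mem_range.1 hi) hk)]

lemma ht_append_right {k : ℕ} (hk : k ≤ n) :
    ht (extFun (Fin.append σ τ)) (m + k) = ht (extFun σ) m + ht (extFun τ) k := by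
  unfold ht
  rw [Finset.sum_range_add]
  congr 1
  · exact Finset.sum_congr rfl fun i hi =>
      by rw [extA_lt σ τ (Finset.mem_range.1 hi)]
  · refine Finset.sum_congr rfl fun i hi => ?_
    have hi' : i < k := Finset.mem_range.1 hi
    rw [extA_ge σ τ (Nat.le_add_right m i) (by omega), Nat.add_sub_cancel_left]

lemma cnt_eq_sum (N : ℕ) (f : ℕ → Bool) (v : ℤ) :
    ((Finset.Icc 1 N).filter (fun k => ht f k = v)).card
      = ∑ i ∈ Finset.range N, (if ht f (1 + i) = v then 1 else 0) := by
  classical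
  rw [Finset.card_filter, ← Finset.Ico_add_one_right_eq_Icc, Finset.sum_Ico_eq_sum_range]
  simp

lemma cnt_append (v : ℤ) (h0 : ht (extFun σ) m = 0) :
    ((Finset.Icc 1 (m + n)).filter (fun k => ht (extFun (Fin.append σ τ)) k = v)).card
      = ((Finset.Icc 1 m).filter (fun k => ht (extFun σ) k = v)).card
        + ((Finset.Icc 1 n).filter (fun k => ht (extFun τ) k = v)).card := by
  classical
  rw [cnt_eq_sum, cnt_eq_sum, cnt_eq_sum, Finset.sum_range_add]
  congr 1
  · refine Finset.sum_congr rfl fun i hi => ?_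
    have hi' : i < m := Finset.mem_range.1 hi
    rw [ht_append_left σ τ (show 1 + i ≤ m by omega)]
  · refine Finset.sum_congr rfl fun i hi => ?_
    have hi' : i < n := Finset.mem_range.1 hi
    rw [show 1 + (m + i) = m + (1 + i) by omega,
      ht_append_right σ τ (show 1 + i ≤ n by omega), h0, zero_add]

lemma mc_append (hm : 1 ≤ m) (hn : 1 ≤ n)
    (hlast : extFun σ (m - 1) = false) (hfirst : extFun τ 0 = true) :
    mc (m + n) (extFun (Fin.append σ τ)) = mc m (extFun σ) + mc n (extFun τ) := by
  classical
  unfold mc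
  rw [Finset.card_filter, Finset.card_filter, Finset.card_filter,
    show m + n - 1 = (m - 1) + (1 + (n - 1)) by omega,
    Finset.sum_range_add, Finset.sum_range_add]
  have h1 : ∀ i ∈ Finset.range (m - 1),
      (if extFun (Fin.append σ τ) i = extFun (Fin.append σ τ) (i + 1) then 1 else 0)
        = (if extFun σ i = extFun σ (i + 1) then 1 else 0) := by
    intro i hi
    have hi' : i < m - 1 := Finset.mem_range.1 hi
    rw [extA_lt σ τ (by omega), extA_lt σ τ (by omega)]
  rw [Finset.sum_congr rfl h1]
  have h2 : (if extFun (Fin.append σ τ) (m - 1 + 0)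
      = extFun (Fin.append σ τ) (m - 1 + 0 + 1) then 1 else 0) = 0 := by
    rw [show m - 1 + 0 + 1 = m by omega]
    rw [extA_lt σ τ (by omega), extA_ge σ τ (le_refl m) (by omega)]
    rw [show m - 1 + 0 = m - 1 from rfl, hlast, Nat.sub_self, hfirst]
    simp
  rw [Finset.sum_range_one, h2, zero_add]
  congr 1
  refine Finset.sum_congr rfl fun i hi => ?_
  have hi' : i < n - 1 := Finset.mem_range.1 hi
  rw [show m - 1 + (1 + i) = m + i by omega,
    extA_ge σ τ (Nat.le_add_right m i) (by omega),
    show m + i + 1 = m + (i + 1) by omega,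
    extA_ge σ τ (Nat.le_add_right m (i + 1)) (by omega)]
  rw [Nat.add_sub_cancel_left, Nat.add_sub_cancel_left]

variable {w : ℕ}

lemma isWalk_append (hσw : IsWalk w m (extFun σ)) (hτw : IsWalk w n (extFun τ))
    (h0 : ht (extFun σ) m = 0) : IsWalk w (m + n) (extFun (Fin.append σ τ)) := by
  intro k hk
  rcases le_or_gt k m with h | h
  · rw [ht_append_left σ τ h]; exact hσw k h
  · have hk2 : k - m ≤ n := by omega
    have hh := ht_append_right σ τ hk2
    rw [show m + (k - m) = k by omega] at hh
    rw [hh, h0, zero_add]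
    exact hτw _ hk2

lemma last_false (hm : 1 ≤ m) (f : ℕ → Bool) (hwk : IsWalk w m f) (h0 : ht f m = 0) :
    f (m - 1) = false := by
  have h1 : ht f m = ht f (m - 1) + stepVal (f (m - 1)) := by
    conv_lhs => rw [show m = (m - 1) + 1 by omega]
    exact Finset.sum_range_succ _ _
  have h2 := (hwk (m - 1) (by omega)).1
  by_contra hb
  have hb' : f (m - 1) = true := by simpa using hb
  rw [hb'] at h1
  simp [stepVal] at h1
  omega

lemma first_true (hn : 1 ≤ n) (f : ℕ → Bool) (hwk : IsWalk w n f) : f 0 = true := by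
  have h1 : ht f 1 = stepVal (f 0) := by simp [ht]
  have h2 := (hwk 1 hn).1
  by_contra hb
  have hb' : f 0 = false := by simpa using hb
  rw [hb'] at h1
  simp [stepVal] at h1
  omega

lemma append_pair_inj :
    Function.Injective (fun p : (Fin m → Bool) × (Fin n → Bool) => Fin.append p.1 p.2) := by
  rintro ⟨σ, τ⟩ ⟨σ', τ'⟩ h
  simp only [Prod.mk.injEq]
  constructor
  · funext i
    have := congrFun h (Fin.castAdd n i)
    simpa [Fin.append_left] using this
  · funext j
    have := congrFun h (Fin.natAdd m j)
    simpa [Fin.append_right] using this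

lemma Zh_zero_eq_one (w : ℕ) (a b c : ℝ) : Zh w 0 0 a b c = 1 := by
  classical
  rw [Zh]
  have hfil : (Finset.univ.filter
      (fun σ : Fin 0 → Bool => IsWalk w 0 (extFun σ) ∧ ht (extFun σ) 0 = ((0:ℕ) : ℤ)))
      = Finset.univ := by
    refine Finset.filter_true_of_mem fun σ _ => ?_
    refine ⟨fun k hk => ?_, by simp [ht]⟩
    interval_cases k
    simp [ht]
  rw [hfil]
  rw [Finset.sum_eq_single_of_mem (fun _ => false) (Finset.mem_univ _)]
  · simp [wt, ma, mb, mc, show Finset.Icc 1 0 = (∅ : Finset ℕ) from rfl]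
  · intro g _ hg
    exact absurd (funext fun i => i.elim0) hg

lemma wt_append (w : ℕ) (a b c : ℝ) (hm1 : 1 ≤ m) (hn1 : 1 ≤ n)
    (hσw : IsWalk w m (extFun σ)) (hσ0 : ht (extFun σ) m = 0)
    (hτw : IsWalk w n (extFun τ)) :
    wt w m a b c (extFun σ) * wt w n a b c (extFun τ)
      = wt w (m + n) a b c (extFun (Fin.append σ τ)) := by
  have hlast := last_false hm1 (extFun σ) hσw hσ0
  have hfirst := first_true hn1 (extFun τ) hτw
  have hma : ma (m + n) (extFun (Fin.append σ τ)) = ma m (extFun σ) + ma n (extFun τ) :=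
    cnt_append σ τ 0 hσ0
  have hmb : mb w (m + n) (extFun (Fin.append σ τ)) = mb w m (extFun σ) + mb w n (extFun τ) :=
    cnt_append σ τ (w : ℤ) hσ0
  have hmc := mc_append σ τ hm1 hn1 hlast hfirst
  rw [wt, wt, wt, hma, hmb, hmc, pow_add, pow_add, pow_add]
  ring

end Aux

/-- supermultiplicativity of the loop partition functions for even lengths. -/
theorem loop_supermultiplicative (w : ℕ) (hw : 1 ≤ w) (a b c : ℝ)
    (ha : 0 < a) (hb : 0 < b) (hc : 0 < c)
    (m n : ℕ) (hm : Even m) (hn : Even n) :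
    Zh w m 0 a b c * Zh w n 0 a b c ≤ Zh w (m + n) 0 a b c := by
  classical
  rcases Nat.eq_zero_or_pos m with hm0 | hm1
  · subst hm0; rw [Zh_zero_eq_one, one_mul, zero_add]
  rcases Nat.eq_zero_or_pos n with hn0 | hn1
  · subst hn0; rw [Zh_zero_eq_one, mul_one, add_zero]
  set A := Finset.univ.filter
    (fun σ : Fin m → Bool => IsWalk w m (extFun σ) ∧ ht (extFun σ) m = ((0 : ℕ) : ℤ)) with hA
  set B := Finset.univ.filter
    (fun τ : Fin n → Bool => IsWalk w n (extFun τ) ∧ ht (extFun τ) n = ((0 : ℕ) : ℤ)) with hB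
  have memA : ∀ σ ∈ A, IsWalk w m (extFun σ) ∧ ht (extFun σ) m = 0 := by
    intro σ hσ
    have := (Finset.mem_filter.1 hσ).2
    simpa using this
  have memB : ∀ τ ∈ B, IsWalk w n (extFun τ) ∧ ht (extFun τ) n = 0 := by
    intro τ hτ
    have := (Finset.mem_filter.1 hτ).2
    simpa using this
  have hZm : Zh w m 0 a b c = ∑ σ ∈ A, wt w m a b c (extFun σ) := rfl
  have hZn : Zh w n 0 a b c = ∑ τ ∈ B, wt w n a b c (extFun τ) := rfl
  rw [hZm, hZn, Finset.sum_mul_sum]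
  have step1 : ∑ σ ∈ A, ∑ τ ∈ B, wt w m a b c (extFun σ) * wt w n a b c (extFun τ)
      = ∑ p ∈ A ×ˢ B, wt w (m + n) a b c (extFun (Fin.append p.1 p.2)) := by
    rw [← Finset.sum_product']
    refine Finset.sum_congr rfl fun p hp => ?_
    rw [Finset.mem_product] at hp
    obtain ⟨h1, h2⟩ := memA p.1 hp.1
    obtain ⟨h3, _⟩ := memB p.2 hp.2
    exact wt_append p.1 p.2 w a b c hm1 hn1 h1 h2 h3
  rw [step1]
  rw [← Finset.sum_image (f := fun ρ : Fin (m + n) → Bool => wt w (m + n) a b c (extFun ρ))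
    (g := fun p : (Fin m → Bool) × (Fin n → Bool) => Fin.append p.1 p.2)
    (fun x _ y _ h => append_pair_inj h)]
  refine Finset.sum_le_sum_of_subset_of_nonneg ?_ ?_
  · intro ρ hρ
    obtain ⟨p, hp, rfl⟩ := Finset.mem_image.1 hρ
    rw [Finset.mem_product] at hp
    obtain ⟨h1, h2⟩ := memA p.1 hp.1
    obtain ⟨h3, h4⟩ := memB p.2 hp.2
    refine Finset.mem_filter.2 ⟨Finset.mem_univ _, isWalk_append p.1 p.2 h1 h3 h2, ?_⟩
    rw [ht_append_right p.1 p.2 (le_refl n), h2, h4]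
    simp
  · intro ρ _ _
    have : (0 : ℝ) ≤ a ^ ma (m + n) (extFun ρ) * b ^ mb w (m + n) (extFun ρ)
        * c ^ mc (m + n) (extFun ρ) := by positivity
    exact this
end

section
/- Fix an integer w ≥ 1 and reals a,b,c > 0, and set b₊ = max{1, 1/b} and c₊ = max{1, 1/c}. Then for all natural numbers n and h with h ≤ w and h ≤ n, Z_{w,n−h,0}(a,b,c) ≤ b₊ · c₊^h · Z_{w,n,h}(a,b,c). -/
open Filter
open scoped Classical

section auxlem
open Finset

lemma ht_succ' (σ : ℕ → Bool) (k : ℕ) : ht σ (k+1) = ht σ k + stepVal (σ k) := by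
  simp [ht, Finset.sum_range_succ]

lemma ht_congr' {σ τ : ℕ → Bool} {k : ℕ} (h : ∀ i < k, σ i = τ i) : ht σ k = ht τ k := by
  unfold ht
  exact Finset.sum_congr rfl (fun i hi => by rw [h i (Finset.mem_range.mp hi)])

lemma pow_aux' {x : ℝ} (hx : 0 < x) {m m' d : ℕ} (h1 : m ≤ m') (h2 : m' ≤ m + d) :
    x ^ m ≤ (max 1 x⁻¹) ^ d * x ^ m' := by
  have hx' : 0 < x⁻¹ := inv_pos.mpr hx
  have h3 : x ^ m' = x ^ m * x ^ (m' - m) := by rw [← pow_add]; congr 1; omega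
  rw [h3]
  have key : (1:ℝ) ≤ (max 1 x⁻¹) ^ d * x ^ (m' - m) := by
    have e1 : (x⁻¹)^(m'-m) ≤ (max 1 x⁻¹)^(m'-m) :=
      pow_le_pow_left₀ hx'.le (le_max_right _ _) _
    have e2 : (max 1 x⁻¹)^(m'-m) ≤ (max 1 x⁻¹)^d :=
      pow_le_pow_right₀ (le_max_left _ _) (by omega)
    have hxp : (0:ℝ) < x ^ (m'-m) := pow_pos hx _
    calc (1:ℝ) = (x⁻¹)^(m'-m) * x^(m'-m) := by
          rw [← mul_pow, inv_mul_cancel₀ hx.ne', one_pow]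
      _ ≤ (max 1 x⁻¹) ^ d * x ^ (m' - m) :=
          mul_le_mul (e1.trans e2) le_rfl hxp.le (by positivity)
  calc x ^ m = x ^ m * 1 := by ring
    _ ≤ x ^ m * ((max 1 x⁻¹) ^ d * x ^ (m' - m)) := by
        exact mul_le_mul_of_nonneg_left key (pow_pos hx m).le
    _ = (max 1 x⁻¹) ^ d * (x ^ m * x ^ (m' - m)) := by ring

end auxlem

/-- `Z_{w,n−h,0} ≤ b₊ c₊^h Z_{w,n,h}`. -/
theorem loop_le_fixed_height (w : ℕ) (hw : 1 ≤ w) (a b c : ℝ)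
    (ha : 0 < a) (hb : 0 < b) (hc : 0 < c)
    (n h : ℕ) (hhw : h ≤ w) (hhn : h ≤ n) :
    Zh w (n - h) 0 a b c ≤ max 1 b⁻¹ * (max 1 c⁻¹) ^ h * Zh w n h a b c := by
  classical
  set m := n - h with hmdef
  have hmn : m + h = n := by omega
  have hmn' : m ≤ n := by omega
  -- the extension map
  set F : (Fin m → Bool) → (Fin n → Bool) :=
    fun σ i => if hi : (i : ℕ) < m then σ ⟨i, hi⟩ else true with hF
  have hext : ∀ (σ : Fin m → Bool) (i : ℕ), i < m → extFun (F σ) i = extFun σ i := by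
    intro σ i hi
    have hin : i < n := lt_of_lt_of_le hi hmn'
    simp [extFun, hF, hi, hin]
  have hext2 : ∀ (σ : Fin m → Bool) (i : ℕ), m ≤ i → i < n → extFun (F σ) i = true := by
    intro σ i h1 h2
    simp [extFun, hF, h2, Nat.not_lt.mpr h1]
  have hht1 : ∀ (σ : Fin m → Bool) (k : ℕ), k ≤ m →
      ht (extFun (F σ)) k = ht (extFun σ) k := by
    intro σ k hk
    exact ht_congr' (fun i hi => hext σ i (lt_of_lt_of_le hi hk))
  -- source and target filter sets
  set S : Finset (Fin m → Bool) := Finset.univ.filter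
      (fun σ : Fin m → Bool => IsWalk w m (extFun σ) ∧ ht (extFun σ) m = ((0:ℕ) : ℤ)) with hS
  set T : Finset (Fin n → Bool) := Finset.univ.filter
      (fun σ : Fin n → Bool => IsWalk w n (extFun σ) ∧ ht (extFun σ) n = (h : ℤ)) with hT
  -- per-element facts
  have hfacts : ∀ σ ∈ S,
      (F σ ∈ T) ∧
      wt w m a b c (extFun σ) ≤ max 1 b⁻¹ * (max 1 c⁻¹) ^ h * wt w n a b c (extFun (F σ)) := by
    intro σ hσ
    rw [hS, Finset.mem_filter] at hσ
    obtain ⟨-, hW, h0⟩ := hσ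
    rw [Nat.cast_zero] at h0
    have hht2 : ∀ j, j ≤ h → ht (extFun (F σ)) (m + j) = (j : ℤ) := by
      intro j
      induction j with
      | zero => intro _; rw [Nat.add_zero, hht1 σ m le_rfl, h0]; simp
      | succ j ih =>
        intro hj
        have : m + (j+1) = (m+j) + 1 := rfl
        rw [this, ht_succ', ih (by omega), hext2 σ (m+j) (by omega) (by omega)]
        simp only [stepVal, if_true]
        push_cast; ring
    have hhtk : ∀ k, m < k → k ≤ n → ht (extFun (F σ)) k = ((k - m : ℕ) : ℤ) := by
      intro k h1 h2
      have : k = m + (k - m) := by omega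
      rw [this]
      rw [hht2 (k - m) (by omega)]
      congr 1; omega
    -- membership in T
    have hwalk : IsWalk w n (extFun (F σ)) := by
      intro k hk
      by_cases hkm : k ≤ m
      · rw [hht1 σ k hkm]; exact hW k hkm
      · rw [hhtk k (by omega) hk]
        constructor
        · positivity
        · have : k - m ≤ w := by omega
          exact_mod_cast this
    have hend : ht (extFun (F σ)) n = (h : ℤ) := by
      have := hht2 h le_rfl
      rwa [hmn] at this
    have hmemT : F σ ∈ T := by
      rw [hT, Finset.mem_filter]
      exact ⟨Finset.mem_univ _, hwalk, hend⟩
    -- ma equality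
    have hma : ma n (extFun (F σ)) = ma m (extFun σ) := by
      unfold ma
      congr 1
      ext k
      simp only [Finset.mem_filter, Finset.mem_Icc]
      constructor
      · rintro ⟨⟨h1, h2⟩, h3⟩
        by_cases hkm : k ≤ m
        · exact ⟨⟨h1, hkm⟩, by rw [← hht1 σ k hkm]; exact h3⟩
        · exfalso
          rw [hhtk k (by omega) h2] at h3
          have : k - m = 0 := by exact_mod_cast h3
          omega
      · rintro ⟨⟨h1, h2⟩, h3⟩
        exact ⟨⟨h1, le_trans h2 hmn'⟩, by rw [hht1 σ k h2]; exact h3⟩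
    -- mb bounds
    have hmb1 : mb w m (extFun σ) ≤ mb w n (extFun (F σ)) := by
      unfold mb
      apply Finset.card_le_card
      intro k hk
      simp only [Finset.mem_filter, Finset.mem_Icc] at hk ⊢
      obtain ⟨⟨h1, h2⟩, h3⟩ := hk
      exact ⟨⟨h1, le_trans h2 hmn'⟩, by rw [hht1 σ k h2]; exact h3⟩
    have hmb2 : mb w n (extFun (F σ)) ≤ mb w m (extFun σ) + 1 := by
      unfold mb
      have hsub : (Finset.Icc 1 n).filter (fun k => ht (extFun (F σ)) k = (w:ℤ)) ⊆
          insert (m + w) ((Finset.Icc 1 m).filter (fun k => ht (extFun σ) k = (w:ℤ))) := by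
        intro k hk
        simp only [Finset.mem_filter, Finset.mem_Icc] at hk
        obtain ⟨⟨h1, h2⟩, h3⟩ := hk
        rw [Finset.mem_insert]
        by_cases hkm : k ≤ m
        · right
          simp only [Finset.mem_filter, Finset.mem_Icc]
          exact ⟨⟨h1, hkm⟩, by rw [← hht1 σ k hkm]; exact h3⟩
        · left
          rw [hhtk k (by omega) h2] at h3
          have : k - m = w := by exact_mod_cast h3
          omega
      calc _ ≤ (insert (m + w) ((Finset.Icc 1 m).filter
              (fun k => ht (extFun σ) k = (w:ℤ)))).card := Finset.card_le_card hsub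
        _ ≤ _ := Finset.card_insert_le _ _
    -- mc bounds
    have hext3 : ∀ i, i < m - 1 →
        ((extFun (F σ) i = extFun (F σ) (i+1)) ↔ (extFun σ i = extFun σ (i+1))) := by
      intro i hi
      rw [hext σ i (by omega), hext σ (i+1) (by omega)]
    have hmc1 : mc m (extFun σ) ≤ mc n (extFun (F σ)) := by
      unfold mc
      apply Finset.card_le_card
      intro i hi
      simp only [Finset.mem_filter, Finset.mem_range] at hi ⊢
      obtain ⟨h1, h2⟩ := hi
      exact ⟨by omega, (hext3 i h1).mpr h2⟩
    have hmc2 : mc n (extFun (F σ)) ≤ mc m (extFun σ) + h := by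
      unfold mc
      have hsub : (Finset.range (n-1)).filter (fun i => extFun (F σ) i = extFun (F σ) (i+1)) ⊆
          ((Finset.range (m-1)).filter (fun i => extFun σ i = extFun σ (i+1))) ∪
          Finset.Ico (m-1) (n-1) := by
        intro i hi
        simp only [Finset.mem_filter, Finset.mem_range] at hi
        obtain ⟨h1, h2⟩ := hi
        rw [Finset.mem_union]
        by_cases him : i < m - 1
        · left
          simp only [Finset.mem_filter, Finset.mem_range]
          exact ⟨him, (hext3 i him).mp h2⟩
        · right
          simp only [Finset.mem_Ico]
          omega
      calc _ ≤ (((Finset.range (m-1)).filter (fun i => extFun σ i = extFun σ (i+1))) ∪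
              Finset.Ico (m-1) (n-1)).card := Finset.card_le_card hsub
        _ ≤ _ + (Finset.Ico (m-1) (n-1)).card := Finset.card_union_le _ _
        _ ≤ _ + h := by
            apply Nat.add_le_add_left
            rw [Nat.card_Ico]
            omega
    -- weight bound
    have hwt : wt w m a b c (extFun σ) ≤
        max 1 b⁻¹ * (max 1 c⁻¹) ^ h * wt w n a b c (extFun (F σ)) := by
      unfold wt
      rw [hma]
      have hb' : b ^ mb w m (extFun σ) ≤
          (max 1 b⁻¹) ^ 1 * b ^ mb w n (extFun (F σ)) :=
        pow_aux' hb hmb1 (by omega)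
      rw [pow_one] at hb'
      have hc' : c ^ mc m (extFun σ) ≤
          (max 1 c⁻¹) ^ h * c ^ mc n (extFun (F σ)) :=
        pow_aux' hc hmc1 hmc2
      have ha' : (0:ℝ) ≤ a ^ ma m (extFun σ) := by positivity
      have h1 : (0:ℝ) ≤ b ^ mb w m (extFun σ) := by positivity
      have h2 : (0:ℝ) ≤ max 1 b⁻¹ * b ^ mb w n (extFun (F σ)) := by positivity
      have h3 : (0:ℝ) ≤ c ^ mc m (extFun σ) := by positivity
      calc a ^ ma m (extFun σ) * b ^ mb w m (extFun σ) * c ^ mc m (extFun σ)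
          ≤ a ^ ma m (extFun σ) * (max 1 b⁻¹ * b ^ mb w n (extFun (F σ))) *
            ((max 1 c⁻¹) ^ h * c ^ mc n (extFun (F σ))) := by
            apply mul_le_mul _ hc' h3 (by positivity)
            exact mul_le_mul_of_nonneg_left hb' ha'
        _ = max 1 b⁻¹ * (max 1 c⁻¹) ^ h *
            (a ^ ma m (extFun σ) * b ^ mb w n (extFun (F σ)) * c ^ mc n (extFun (F σ))) := by
            ring
    exact ⟨hmemT, hwt⟩
  -- injectivity
  have hinj : Function.Injective F := by
    intro σ τ hστ
    funext i
    have := congrFun hστ ⟨(i : ℕ), lt_of_lt_of_le i.isLt hmn'⟩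
    simpa [hF, i.isLt] using this
  -- sum manipulation
  have hwtnn : ∀ τ : Fin n → Bool, 0 ≤ wt w n a b c (extFun τ) := by
    intro τ; unfold wt; positivity
  calc Zh w (n - h) 0 a b c
      = ∑ σ ∈ S, wt w m a b c (extFun σ) := by rw [Zh, hS]
    _ ≤ ∑ σ ∈ S, max 1 b⁻¹ * (max 1 c⁻¹) ^ h * wt w n a b c (extFun (F σ)) :=
        Finset.sum_le_sum (fun σ hσ => (hfacts σ hσ).2)
    _ = max 1 b⁻¹ * (max 1 c⁻¹) ^ h * ∑ σ ∈ S, wt w n a b c (extFun (F σ)) := by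
        rw [Finset.mul_sum]
    _ = max 1 b⁻¹ * (max 1 c⁻¹) ^ h * ∑ τ ∈ S.image F, wt w n a b c (extFun τ) := by
        rw [Finset.sum_image (fun x _ y _ hxy => hinj hxy)]
    _ ≤ max 1 b⁻¹ * (max 1 c⁻¹) ^ h * ∑ τ ∈ T, wt w n a b c (extFun τ) := by
        apply mul_le_mul_of_nonneg_left _ (by positivity)
        apply Finset.sum_le_sum_of_subset_of_nonneg
        · intro τ hτ
          rw [Finset.mem_image] at hτ
          obtain ⟨σ, hσ, rfl⟩ := hτ
          exact (hfacts σ hσ).1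
        · intro τ _ _; exact hwtnn τ
    _ = max 1 b⁻¹ * (max 1 c⁻¹) ^ h * Zh w n h a b c := by rw [Zh, hT]
end

section
/- For all reals a,c > 0, the strip free energies with no interaction at the top wall converge to the half-plane free energy: lim_{w→∞} κ_w(a,1,c) = κ⁺(a,c), where κ⁺(a,c) = lim_{n→∞} (1/(2n)) log Z⁺_{2n,0}(a,c) is the half-plane loop free energy (this limit exists by supermultiplicativity). Moreover κ_w(a,1,c) ≤ κ⁺(a,c) for every w ≥ 1. -/
open Filter
open scoped Classical

noncomputable section

/-- The first `n` steps of `σ` stay in the half-plane `y ≥ 0`. -/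
def IsHPWalk (n : ℕ) (σ : ℕ → Bool) : Prop := ∀ k ≤ n, 0 ≤ ht σ k

/-- Half-plane loop partition function `Z⁺_{n,0}(a,c)`: sum of `a^{m_a} c^{m_c}` over
half-plane walks of length `n` ending at height 0. -/
def Zp (n : ℕ) (a c : ℝ) : ℝ :=
  ∑ σ ∈ Finset.univ.filter
      (fun σ : Fin n → Bool => IsHPWalk n (extFun σ) ∧ ht (extFun σ) n = 0),
    a ^ ma n (extFun σ) * c ^ mc n (extFun σ)

end

/-!
Lower bound: a half-plane loop of length `2n` never rises above height `n`, so for `w ≥ n` it is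
a loop in the strip, and gluing `k` such loops end to end (each junction creates at most one
stiffness point) gives `(min 1 c · Z⁺_{2n,0})^k ≤ Z_{w,2nk}`. Hence
`κ_w ≥ log (min 1 c · Z⁺_{2n,0}) / 2n` for all `w ≥ n`, and the right side tends to `κ⁺`.

Upper bound: a strip walk ending at height `h ≤ w` is closed into a half-plane loop by `h` down
steps followed by a zigzag along the bottom wall. The padding length `p ≤ w + 1` does not depend
on the length of the walk, it changes the weight by a factor at least `min(1,a)^p min(1,c)^p`,
and the closing map is injective; so
`min(1,a)^p min(1,c)^p Z_{w,n} ≤ Z⁺_{n+p,0}` and `κ_w ≤ κ⁺`.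
-/

theorem Finset.sum_le_sum_of_injOn {ι κ M : Type*} [AddCommMonoid M] [PartialOrder M]
    [IsOrderedAddMonoid M] {s : Finset ι} {t : Finset κ} {f : ι → M} {g : κ → M}
    (e : ι → κ) (he : Set.InjOn e s) (hest : Set.MapsTo e s t) (hg : ∀ j ∈ t, 0 ≤ g j)
    (h : ∀ i ∈ s, f i ≤ g (e i)) : ∑ i ∈ s, f i ≤ ∑ j ∈ t, g j := by
  classical
  calc ∑ i ∈ s, f i ≤ ∑ i ∈ s, g (e i) := Finset.sum_le_sum h
    _ = ∑ j ∈ s.image e, g j := (Finset.sum_image he).symm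
    _ ≤ ∑ j ∈ t, g j := Finset.sum_le_sum_of_subset_of_nonneg
          (Finset.image_subset_iff.2 hest) fun j hj _ => hg j hj

lemma tendsto_of_eventually_le_of_tendsto_lower {κ L : ℕ → ℝ} {l : ℝ}
    (hL : Tendsto L atTop (nhds l)) (hκl : ∀ᶠ w in atTop, κ w ≤ l)
    (hLκ : ∀ᶠ n in atTop, ∀ᶠ w in atTop, L n ≤ κ w) : Tendsto κ atTop (nhds l) := by
  refine tendsto_order.2 ⟨fun b hb => ?_, fun b hb => hκl.mono fun w hw => hw.trans_lt hb⟩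
  obtain ⟨n, hbn, hn⟩ := ((hL.eventually (lt_mem_nhds hb)).and hLκ).exists
  exact hn.mono fun w hw => hbn.trans_le hw

lemma pow_mul_min_one_pow_le {a : ℝ} (ha : 0 < a) {s t d : ℕ} (h₁ : s ≤ t) (h₂ : t ≤ s + d) :
    a ^ s * min 1 a ^ d ≤ a ^ t := by
  obtain ⟨e, rfl⟩ := Nat.exists_eq_add_of_le h₁
  have h₀ : 0 ≤ min 1 a := le_min zero_le_one ha.le
  rw [pow_add]
  gcongr
  calc min 1 a ^ d ≤ min 1 a ^ e := pow_le_pow_of_le_one h₀ (min_le_left _ _) (by omega)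
    _ ≤ a ^ e := pow_le_pow_left₀ h₀ (min_le_right _ _) e

lemma log_div_le_of_pow_le {u : ℕ → ℝ} {L x : ℝ} {q : ℕ}
    (hu : Tendsto (fun N : ℕ => Real.log (u N) / N) atTop (nhds L)) (hx : 0 < x) (hq : 0 < q)
    (hxu : ∀ k, x ^ k ≤ u (q * k)) : Real.log x / q ≤ L := by
  have hsub := hu.comp (strictMono_mul_left_of_pos hq).tendsto_atTop
  refine ge_of_tendsto hsub ((eventually_gt_atTop 0).mono fun k hk => ?_)
  have hlog : k * Real.log x ≤ Real.log (u (q * k)) := by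
    rw [← Real.log_pow]
    exact Real.log_le_log (pow_pos hx k) (hxu k)
  have hk' : (0 : ℝ) < k := by exact_mod_cast hk
  calc Real.log x / q = k * Real.log x / ((q * k : ℕ) : ℝ) := by
        push_cast
        field_simp
    _ ≤ Real.log (u (q * k)) / ((q * k : ℕ) : ℝ) := by gcongr

lemma tendsto_sub_div_of_shift {f : ℕ → ℝ} {L : ℝ}
    (hf : Tendsto (fun m : ℕ => f m / m) atTop (nhds L)) (d : ℕ) (C : ℝ) :
    Tendsto (fun m : ℕ => (f (m + d) - C) / m) atTop (nhds L) := by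
  have hshift : Tendsto (fun m : ℕ => f (m + d) / ((m + d : ℕ) : ℝ)) atTop (nhds L) :=
    (tendsto_add_atTop_iff_nat d).2 hf
  have hratio : Tendsto (fun m : ℕ => 1 + (d : ℝ) / m) atTop (nhds 1) := by
    simpa using tendsto_const_nhds.add (tendsto_const_div_atTop_nhds_zero_nat (d : ℝ))
  have hlim := (hshift.mul hratio).sub (tendsto_const_div_atTop_nhds_zero_nat C)
  rw [mul_one, sub_zero] at hlim
  refine hlim.congr' ((eventually_gt_atTop 0).mono fun m hm => ?_)
  have hm' : (0 : ℝ) < m := by exact_mod_cast hm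
  push_cast
  field_simp

open Finset

namespace StripWalk

variable {a c : ℝ}

def shift (n : ℕ) (ρ : ℕ → Bool) : ℕ → Bool := fun j => ρ (n + j)

def cat (n : ℕ) (σ τ : ℕ → Bool) : ℕ → Bool := fun i => if i < n then σ i else τ (i - n)

def zigzag : ℕ → Bool := fun i => decide (Even i)

def padSeq (h : ℕ) : ℕ → Bool := cat h (fun _ => false) zigzag

lemma cat_of_lt {n i : ℕ} (σ τ : ℕ → Bool) (h : i < n) : cat n σ τ i = σ i := if_pos h

lemma shift_cat (n : ℕ) (σ τ : ℕ → Bool) : shift n (cat n σ τ) = τ := by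
  funext j
  simp [shift, cat]

lemma ht_succ (ρ : ℕ → Bool) (k : ℕ) : ht ρ (k + 1) = ht ρ k + stepVal (ρ k) :=
  sum_range_succ _ _

lemma ht_congr {σ τ : ℕ → Bool} {k : ℕ} (h : ∀ i < k, σ i = τ i) : ht σ k = ht τ k :=
  sum_congr rfl fun i hi => by rw [h i (mem_range.mp hi)]

lemma ht_add (ρ : ℕ → Bool) (n j : ℕ) : ht ρ (n + j) = ht ρ n + ht (shift n ρ) j :=
  sum_range_add _ n j

lemma abs_ht_le (ρ : ℕ → Bool) (k : ℕ) : |ht ρ k| ≤ k := by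
  calc |ht ρ k| ≤ ∑ i ∈ range k, |stepVal (ρ i)| := abs_sum_le_sum_abs _ _
    _ = k := by simp [stepVal, apply_ite]

lemma even_ht_add (ρ : ℕ → Bool) (n : ℕ) : Even (ht ρ n + n) := by
  have : ht ρ n + n = ∑ i ∈ range n, (stepVal (ρ i) + 1) := by simp [ht, sum_add_distrib]
  rw [this]
  exact even_sum _ fun i _ => by unfold stepVal; split <;> decide

lemma ht_cat_of_le {n k : ℕ} (σ τ : ℕ → Bool) (h : k ≤ n) : ht (cat n σ τ) k = ht σ k :=
  ht_congr fun i hi => cat_of_lt σ τ (by omega)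

lemma ht_cat_add (n j : ℕ) (σ τ : ℕ → Bool) :
    ht (cat n σ τ) (n + j) = ht σ n + ht τ j := by
  rw [ht_add, ht_cat_of_le σ τ le_rfl, shift_cat]

lemma ht_zigzag (i : ℕ) : ht zigzag i = (i % 2 : ℕ) := by
  induction i with
  | zero => simp [ht]
  | succ i ih =>
    rw [ht_succ, ih]
    by_cases hi : Even i
    · have := Nat.even_iff.mp hi
      simp [zigzag, stepVal, hi]; omega
    · have := Nat.odd_iff.mp (Nat.not_even_iff_odd.mp hi)
      simp [zigzag, stepVal, hi]; omega

lemma ma_congr {σ τ : ℕ → Bool} {n : ℕ} (h : ∀ i < n, σ i = τ i) : ma n σ = ma n τ := by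
  unfold ma
  congr 1
  refine filter_congr fun k hk => ?_
  rw [ht_congr fun i hi => h i (by rw [mem_Icc] at hk; omega)]

lemma mc_congr {σ τ : ℕ → Bool} {n : ℕ} (h : ∀ i < n, σ i = τ i) : mc n σ = mc n τ := by
  unfold mc
  congr 1
  refine filter_congr fun k hk => ?_
  rw [mem_range] at hk
  rw [h k (by omega), h (k + 1) (by omega)]

lemma ma_add (ρ : ℕ → Bool) (n m : ℕ) :
    ma (n + m) ρ = ma n ρ + ((Icc 1 m).filter fun j => ht ρ (n + j) = 0).card := by
  have hsplit : Icc 1 (n + m) = Icc 1 n ∪ (Icc 1 m).map (addLeftEmbedding n) := by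
    ext k
    simp only [mem_union, mem_Icc, Finset.mem_map, addLeftEmbedding_apply]
    constructor
    · intro hk
      by_cases hkn : k ≤ n
      · exact Or.inl ⟨hk.1, hkn⟩
      · exact Or.inr ⟨k - n, by omega, by omega⟩
    · rintro (hk | ⟨j, hj, rfl⟩) <;> omega
  have hdisj : Disjoint (Icc 1 n) ((Icc 1 m).map (addLeftEmbedding n)) := by
    simp only [disjoint_left, mem_Icc, Finset.mem_map, addLeftEmbedding_apply]
    rintro k hk ⟨j, hj, rfl⟩
    omega
  rw [ma, hsplit, filter_union, card_union_of_disjoint (disjoint_filter_filter hdisj),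
    filter_map, card_map]
  rfl

lemma ma_add_of_ht_eq_zero {ρ : ℕ → Bool} {n : ℕ} (hρ : ht ρ n = 0) (m : ℕ) :
    ma (n + m) ρ = ma n ρ + ma m (shift n ρ) := by
  rw [ma_add]
  simp only [ht_add, hρ, zero_add]
  rfl

lemma ma_le_ma_add (ρ : ℕ → Bool) (n m : ℕ) : ma n ρ ≤ ma (n + m) ρ := by
  rw [ma_add]; omega

lemma ma_add_le (ρ : ℕ → Bool) (n m : ℕ) : ma (n + m) ρ ≤ ma n ρ + m := by
  rw [ma_add]
  have := (card_filter_le (Icc 1 m) fun j => ht ρ (n + j) = 0).trans (Nat.card_Icc 1 m).le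
  omega

lemma mc_le_sub_one (ρ : ℕ → Bool) (m : ℕ) : mc m ρ ≤ m - 1 :=
  (card_filter_le _ _).trans (card_range _).le

lemma mc_add {n m : ℕ} (hn : 1 ≤ n) (hm : 1 ≤ m) (ρ : ℕ → Bool) :
    mc (n + m) ρ = mc n ρ + (if ρ (n - 1) = ρ n then 1 else 0) + mc m (shift n ρ) := by
  obtain ⟨n, rfl⟩ := Nat.exists_eq_add_of_le' hn
  obtain ⟨m, rfl⟩ := Nat.exists_eq_add_of_le' hm
  have hlen : n + 1 + (m + 1) - 1 = n + (1 + m) := by omega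
  simp only [mc, card_filter, hlen, sum_range_add, sum_range_one, Nat.add_sub_cancel, shift]
  simp only [add_zero, add_assoc, add_comm 1]

lemma shift_zero (ρ : ℕ → Bool) : shift 0 ρ = ρ := by
  funext j
  simp [shift]

lemma mc_add_mc_shift_le (ρ : ℕ → Bool) (n m : ℕ) :
    mc n ρ + mc m (shift n ρ) ≤ mc (n + m) ρ := by
  rcases Nat.eq_zero_or_pos n with rfl | hn
  · simp [shift_zero, mc]
  rcases Nat.eq_zero_or_pos m with rfl | hm
  · simp [mc]
  rw [mc_add hn hm]
  omega

lemma mc_add_le_mc_add_mc_shift (ρ : ℕ → Bool) (n m : ℕ) :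
    mc (n + m) ρ ≤ mc n ρ + mc m (shift n ρ) + 1 := by
  rcases Nat.eq_zero_or_pos n with rfl | hn
  · simp [shift_zero, mc]
  rcases Nat.eq_zero_or_pos m with rfl | hm
  · simp [mc]
  rw [mc_add hn hm]
  split <;> omega

lemma mc_le_mc_add (ρ : ℕ → Bool) (n m : ℕ) : mc n ρ ≤ mc (n + m) ρ :=
  (Nat.le_add_right _ _).trans (mc_add_mc_shift_le ρ n m)

lemma mc_add_le (ρ : ℕ → Bool) (n m : ℕ) : mc (n + m) ρ ≤ mc n ρ + m := by
  rcases Nat.eq_zero_or_pos m with rfl | hm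
  · simp
  have := mc_add_le_mc_add_mc_shift ρ n m
  have := mc_le_sub_one (shift n ρ) m
  omega

lemma ma_cat {n : ℕ} {σ : ℕ → Bool} (hσ : ht σ n = 0) (τ : ℕ → Bool) (m : ℕ) :
    ma (n + m) (cat n σ τ) = ma n σ + ma m τ := by
  rw [ma_add_of_ht_eq_zero (by rwa [ht_cat_of_le σ τ le_rfl]), shift_cat,
    ma_congr fun i hi => cat_of_lt σ τ hi]

lemma mc_add_mc_le_mc_cat (n m : ℕ) (σ τ : ℕ → Bool) :
    mc n σ + mc m τ ≤ mc (n + m) (cat n σ τ) := by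
  simpa [shift_cat, mc_congr fun i hi => cat_of_lt σ τ hi] using
    mc_add_mc_shift_le (cat n σ τ) n m

lemma mc_cat_le (n m : ℕ) (σ τ : ℕ → Bool) :
    mc (n + m) (cat n σ τ) ≤ mc n σ + mc m τ + 1 := by
  simpa [shift_cat, mc_congr fun i hi => cat_of_lt σ τ hi] using
    mc_add_le_mc_add_mc_shift (cat n σ τ) n m

def wtAC (n : ℕ) (a c : ℝ) (ρ : ℕ → Bool) : ℝ := a ^ ma n ρ * c ^ mc n ρ

lemma wt_one (w n : ℕ) (a c : ℝ) (ρ : ℕ → Bool) : wt w n a 1 c ρ = wtAC n a c ρ := by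
  simp [wt, wtAC]

lemma wtAC_pos (ha : 0 < a) (hc : 0 < c) (n : ℕ) (ρ : ℕ → Bool) : 0 < wtAC n a c ρ := by
  unfold wtAC; positivity

lemma wtAC_congr {σ τ : ℕ → Bool} {n : ℕ} (h : ∀ i < n, σ i = τ i) :
    wtAC n a c σ = wtAC n a c τ := by
  rw [wtAC, wtAC, ma_congr h, mc_congr h]

lemma min_one_pow_mul_wtAC_le_wtAC_add (ha : 0 < a) (hc : 0 < c) (ρ : ℕ → Bool) (n p : ℕ) :
    min 1 a ^ p * min 1 c ^ p * wtAC n a c ρ ≤ wtAC (n + p) a c ρ := by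
  have hma := pow_mul_min_one_pow_le ha (ma_le_ma_add ρ n p) (ma_add_le ρ n p)
  have hmc := pow_mul_min_one_pow_le hc (mc_le_mc_add ρ n p) (mc_add_le ρ n p)
  calc min 1 a ^ p * min 1 c ^ p * wtAC n a c ρ
      = (a ^ ma n ρ * min 1 a ^ p) * (c ^ mc n ρ * min 1 c ^ p) := by unfold wtAC; ring
    _ ≤ wtAC (n + p) a c ρ := by unfold wtAC; gcongr

lemma min_one_mul_wtAC_mul_wtAC_le_wtAC_cat (ha : 0 < a) (hc : 0 < c) {n : ℕ} {σ : ℕ → Bool}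
    (hσ : ht σ n = 0) (τ : ℕ → Bool) (m : ℕ) :
    min 1 c * (wtAC n a c σ * wtAC m a c τ) ≤ wtAC (n + m) a c (cat n σ τ) := by
  have hmc := pow_mul_min_one_pow_le hc (mc_add_mc_le_mc_cat n m σ τ) (mc_cat_le n m σ τ)
  calc min 1 c * (wtAC n a c σ * wtAC m a c τ)
      = a ^ (ma n σ + ma m τ) * (c ^ (mc n σ + mc m τ) * min 1 c ^ 1) := by
        unfold wtAC; ring
    _ ≤ wtAC (n + m) a c (cat n σ τ) := by
        rw [wtAC, ma_cat hσ]
        gcongr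

lemma ht_padSeq_of_le {h j : ℕ} (hj : j ≤ h) : ht (padSeq h) j = -j := by
  rw [padSeq, ht_cat_of_le _ _ hj]
  simp [ht, stepVal]

lemma ht_padSeq_add (h i : ℕ) : ht (padSeq h) (h + i) = -h + (i % 2 : ℕ) := by
  rw [padSeq, ht_cat_add, ht_zigzag, ← ht_padSeq_of_le (h := h) le_rfl, padSeq,
    ht_cat_of_le _ _ le_rfl]

lemma two_mul_ht_le {ρ : ℕ → Bool} {N k : ℕ} (hN : ht ρ N = 0) (hk : k ≤ N) :
    2 * ht ρ k ≤ N := by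
  have hsplit := ht_add ρ k (N - k)
  rw [Nat.add_sub_cancel' hk, hN] at hsplit
  have h₁ := abs_le.mp (abs_ht_le ρ k)
  have h₂ := abs_le.mp (abs_ht_le (shift k ρ) (N - k))
  push_cast [hk] at h₂
  linarith

lemma isWalk_cat {w n m : ℕ} {σ τ : ℕ → Bool} (hσ : IsWalk w n σ) (hσn : ht σ n = 0)
    (hτ : IsWalk w m τ) : IsWalk w (n + m) (cat n σ τ) := by
  intro k hk
  rcases le_or_gt k n with hkn | hkn
  · rw [ht_cat_of_le σ τ hkn]
    exact hσ k hkn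
  · obtain ⟨j, rfl⟩ := Nat.exists_eq_add_of_le hkn.le
    rw [ht_cat_add, hσn, zero_add]
    exact hτ j (by omega)

lemma isHPWalk_cat_padSeq {n p h : ℕ} {σ τ : ℕ → Bool} (hσ : IsHPWalk n σ)
    (hσn : ht σ n = h) (hτ : ∀ i < p, τ i = padSeq h i) (hhp : h ≤ p) (hpar : Even (h + p)) :
    IsHPWalk (n + p) (cat n σ τ) ∧ ht (cat n σ τ) (n + p) = 0 := by
  have hpad : ∀ j ≤ p, ht (cat n σ τ) (n + j) = h + ht (padSeq h) j := fun j hj => by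
    rw [ht_cat_add, hσn, ht_congr fun i hi => hτ i (by omega)]
  refine ⟨fun k hk => ?_, ?_⟩
  · rcases le_or_gt k n with hkn | hkn
    · rw [ht_cat_of_le σ τ hkn]
      exact hσ k hkn
    obtain ⟨j, rfl⟩ := Nat.exists_eq_add_of_le hkn.le
    rw [hpad j (by omega)]
    rcases le_or_gt j h with hjh | hjh
    · rw [ht_padSeq_of_le hjh]
      omega
    · obtain ⟨i, rfl⟩ := Nat.exists_eq_add_of_le hjh.le
      rw [ht_padSeq_add]
      omega
  · obtain ⟨i, rfl⟩ := Nat.exists_eq_add_of_le hhp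
    rw [hpad _ le_rfl, ht_padSeq_add]
    have : (h + (h + i)) % 2 = 0 := Nat.even_iff.mp hpar
    have : i % 2 = 0 := by omega
    simp [this]

lemma extFun_apply_of_lt {n i : ℕ} (ρ : ℕ → Bool) (hi : i < n) :
    extFun (fun j : Fin n => ρ j) i = ρ i := dif_pos hi

lemma extFun_append {n m : ℕ} (σ : Fin n → Bool) (τ : Fin m → Bool) :
    extFun (Fin.append σ τ) = cat n (extFun σ) (extFun τ) := by
  funext i
  simp only [extFun, cat]
  split_ifs <;> first | omega | simp [Fin.append, Fin.addCases, *]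

lemma ht_extFun_zigzag {n k : ℕ} (hk : k ≤ n) :
    ht (extFun fun i : Fin n => zigzag i) k = (k % 2 : ℕ) := by
  rw [ht_congr fun i hi => extFun_apply_of_lt zigzag (by omega), ht_zigzag]

lemma Z_pos (ha : 0 < a) (hc : 0 < c) {w : ℕ} (hw : 1 ≤ w) (n : ℕ) : 0 < Z w n a 1 c := by
  refine sum_pos' (fun σ _ => (wt_one w n a c _ ▸ wtAC_pos ha hc n _).le)
    ⟨fun i => zigzag i, ?_, wt_one w n a c _ ▸ wtAC_pos ha hc n _⟩
  simp only [Finset.mem_filter, Finset.mem_univ, true_and]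
  intro k hk
  rw [ht_extFun_zigzag hk]
  omega

lemma Zp_pos (ha : 0 < a) (hc : 0 < c) (n : ℕ) : 0 < Zp (2 * n) a c := by
  refine sum_pos' (fun σ _ => (wtAC_pos ha hc (2 * n) _).le)
    ⟨fun i => zigzag i, ?_, wtAC_pos ha hc (2 * n) _⟩
  simp only [Finset.mem_filter, Finset.mem_univ, true_and]
  refine ⟨fun k hk => ?_, ?_⟩ <;> rw [ht_extFun_zigzag (by omega)] <;> omega

lemma Zh_zero (w : ℕ) (a c : ℝ) : Zh w 0 0 a 1 c = 1 := by
  simp [Zh, wt, ma, mc, IsWalk, ht]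

lemma Zh_le_Z (ha : 0 < a) (hc : 0 < c) (w n h : ℕ) : Zh w n h a 1 c ≤ Z w n a 1 c :=
  sum_le_sum_of_subset_of_nonneg (fun σ hσ => by
      simp only [Finset.mem_filter] at hσ ⊢
      exact ⟨hσ.1, hσ.2.1⟩)
    fun σ _ _ => (wt_one w n a c _ ▸ wtAC_pos ha hc n _).le

lemma Zp_le_Zh {w n : ℕ} (hnw : n ≤ w) : Zp (2 * n) a c ≤ Zh w (2 * n) 0 a 1 c := by
  refine le_of_eq (sum_congr (filter_congr fun σ _ => ?_) fun σ _ => (wt_one w _ a c _).symm)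
  rw [Nat.cast_zero]
  refine ⟨fun ⟨hσ, hσn⟩ => ⟨fun k hk => ⟨hσ k hk, ?_⟩, hσn⟩,
    fun ⟨hσ, hσn⟩ => ⟨fun k hk => (hσ k hk).1, hσn⟩⟩
  have := two_mul_ht_le hσn hk
  push_cast at this
  omega

lemma min_one_mul_Zh_mul_Zh_le (ha : 0 < a) (hc : 0 < c) (w n m : ℕ) :
    min 1 c * (Zh w n 0 a 1 c * Zh w m 0 a 1 c) ≤ Zh w (n + m) 0 a 1 c := by
  unfold Zh
  rw [sum_mul_sum, ← sum_product', mul_sum]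
  refine sum_le_sum_of_injOn (fun p => Fin.append p.1 p.2)
    (Fin.appendEquiv n m).injective.injOn (fun p hp => ?_)
    (fun σ _ => (wt_one w _ a c _ ▸ wtAC_pos ha hc _ _).le) (fun p hp => ?_)
  all_goals
    simp only [Finset.mem_coe, Finset.mem_product, Finset.mem_filter, Finset.mem_univ, true_and,
      Nat.cast_zero] at hp ⊢
    simp only [wt_one, extFun_append]
  · exact ⟨isWalk_cat hp.1.1 hp.1.2 hp.2.1, by rw [ht_cat_add, hp.1.2, hp.2.2, add_zero]⟩
  · exact min_one_mul_wtAC_mul_wtAC_le_wtAC_cat ha hc hp.1.2 _ m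

lemma min_one_pow_mul_Z_le_Zp (ha : 0 < a) (hc : 0 < c) {w n p : ℕ} (hwp : w ≤ p)
    (hnp : Even (n + p)) : min 1 a ^ p * min 1 c ^ p * Z w n a 1 c ≤ Zp (n + p) a c := by
  unfold Z Zp
  rw [mul_sum]
  let pad (σ : Fin n → Bool) : Fin p → Bool := fun j => padSeq (ht (extFun σ) n).toNat j
  refine sum_le_sum_of_injOn (fun σ => Fin.append σ (pad σ)) (fun σ _ σ' _ h => ?_)
    (fun σ hσ => ?_) (fun σ _ => (wtAC_pos ha hc _ _).le) (fun σ _ => ?_)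
  · simpa using congrArg (fun f => fun i : Fin n => f (Fin.castAdd p i)) h
  · simp only [Finset.coe_filter, Finset.mem_univ, true_and, Set.mem_ofPred_eq,
      extFun_append] at hσ ⊢
    obtain ⟨hσ₀, hσw⟩ := hσ n le_rfl
    refine isHPWalk_cat_padSeq (fun k hk => (hσ k hk).1) (Int.toNat_of_nonneg hσ₀).symm
      (fun i hi => extFun_apply_of_lt _ hi) (by omega) ?_
    have := even_ht_add (extFun σ) n
    rw [← Int.toNat_of_nonneg hσ₀] at this
    rw [Nat.even_iff] at hnp ⊢
    rw [Int.even_iff] at this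
    omega
  · simp only [wt_one, extFun_append]
    rw [wtAC_congr fun i hi => (cat_of_lt (extFun σ) (extFun (pad σ)) hi).symm]
    exact min_one_pow_mul_wtAC_le_wtAC_add ha hc _ n p

lemma pow_le_Zh (ha : 0 < a) (hc : 0 < c) {w n : ℕ} (hnw : n ≤ w) (k : ℕ) :
    (min 1 c * Zp (2 * n) a c) ^ k ≤ Zh w (2 * n * k) 0 a 1 c := by
  induction k with
  | zero => simp [Zh_zero]
  | succ k ih =>
    have hc₀ : 0 ≤ min 1 c := le_min zero_le_one hc.le
    calc (min 1 c * Zp (2 * n) a c) ^ (k + 1)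
        = min 1 c * ((min 1 c * Zp (2 * n) a c) ^ k * Zp (2 * n) a c) := by ring
      _ ≤ min 1 c * (Zh w (2 * n * k) 0 a 1 c * Zh w (2 * n) 0 a 1 c) := by
        have hx : 0 ≤ (min 1 c * Zp (2 * n) a c) ^ k :=
          pow_nonneg (mul_pos (lt_min one_pos hc) (Zp_pos ha hc n)).le k
        exact mul_le_mul_of_nonneg_left
          (mul_le_mul ih (Zp_le_Zh hnw) (Zp_pos ha hc n).le (hx.trans ih)) hc₀
      _ ≤ Zh w (2 * n * (k + 1)) 0 a 1 c := by
        rw [mul_add, mul_one]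
        exact min_one_mul_Zh_mul_Zh_le ha hc w _ _

lemma le_free_energy (ha : 0 < a) (hc : 0 < c) {w n : ℕ} (hn : 1 ≤ n) (hnw : n ≤ w) {κw : ℝ}
    (hκw : Tendsto (fun N : ℕ => Real.log (Z w N a 1 c) / N) atTop (nhds κw)) :
    Real.log (min 1 c * Zp (2 * n) a c) / (2 * n) ≤ κw := by
  have := log_div_le_of_pow_le hκw (mul_pos (lt_min one_pos hc) (Zp_pos ha hc n))
    (by omega : 0 < 2 * n) fun k => (pow_le_Zh ha hc hnw k).trans (Zh_le_Z ha hc w _ 0)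
  exact_mod_cast this

lemma free_energy_le (ha : 0 < a) (hc : 0 < c) {w : ℕ} (hw : 1 ≤ w) {κw κp : ℝ}
    (hκw : Tendsto (fun N : ℕ => Real.log (Z w N a 1 c) / N) atTop (nhds κw))
    (hκp : Tendsto (fun n : ℕ => Real.log (Zp (2 * n) a c) / (2 * (n : ℝ))) atTop (nhds κp)) :
    κw ≤ κp := by
  -- strip walks of even length `2 * m` padded by `2 * d ≥ w` steps close into loops
  set d := (w + 1) / 2
  set δ := min 1 a ^ (2 * d) * min 1 c ^ (2 * d)
  have hδ : 0 < δ := by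
    have := lt_min one_pos ha
    have := lt_min one_pos hc
    positivity
  have hZ : ∀ m, δ * Z w (2 * m) a 1 c ≤ Zp (2 * (m + d)) a c := fun m => by
    rw [mul_add]
    exact min_one_pow_mul_Z_le_Zp ha hc (by omega) (by rw [← mul_add]; exact even_two_mul _)
  have hκw' := hκw.comp (strictMono_mul_left_of_pos two_pos).tendsto_atTop
  have hκp' := tendsto_sub_div_of_shift (f := fun m => Real.log (Zp (2 * m) a c) / 2)
    (by simpa only [div_div] using hκp) d (Real.log δ / 2)
  refine le_of_tendsto_of_tendsto hκw' hκp' ((eventually_gt_atTop 0).mono fun m hm => ?_)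
  have hlog : Real.log δ + Real.log (Z w (2 * m) a 1 c) ≤ Real.log (Zp (2 * (m + d)) a c) := by
    rw [← Real.log_mul hδ.ne' (Z_pos ha hc hw _).ne']
    exact Real.log_le_log (mul_pos hδ (Z_pos ha hc hw _)) (hZ m)
  have hm' : (0 : ℝ) < m := by exact_mod_cast hm
  simp only [Function.comp_apply, Nat.cast_mul, Nat.cast_ofNat]
  rw [div_le_div_iff₀ (by positivity) hm', show ∀ x y : ℝ, (x / 2 - y / 2) * (2 * m) = (x - y) * m
    by intro x y; ring]
  exact mul_le_mul_of_nonneg_right (by linarith) hm'.le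

end StripWalk

/-- with no interaction at the top wall, the strip free energies converge
from below to the half-plane loop free energy. -/
theorem strip_to_halfplane (a c : ℝ) (ha : 0 < a) (hc : 0 < c)
    (κp : ℝ)
    (hκp : Tendsto (fun n : ℕ => Real.log (Zp (2 * n) a c) / (2 * (n : ℝ))) atTop (nhds κp))
    (κ : ℕ → ℝ)
    (hκ : ∀ w : ℕ, 1 ≤ w →
      Tendsto (fun n : ℕ => Real.log (Z w n a 1 c) / (n : ℝ)) atTop (nhds (κ w))) :
    Tendsto κ atTop (nhds κp) ∧ ∀ w : ℕ, 1 ≤ w → κ w ≤ κp := by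
  have upper : ∀ w, 1 ≤ w → κ w ≤ κp := fun w hw => StripWalk.free_energy_le ha hc hw (hκ w hw) hκp
  have hc₀ : 0 < min 1 c := lt_min one_pos hc
  have lower : Tendsto (fun n : ℕ => Real.log (min 1 c * Zp (2 * n) a c) / (2 * n)) atTop
      (nhds κp) := by
    have h := (tendsto_const_div_atTop_nhds_zero_nat (Real.log (min 1 c) / 2)).add hκp
    rw [zero_add] at h
    refine h.congr fun n => ?_
    rw [Real.log_mul hc₀.ne' (StripWalk.Zp_pos ha hc n).ne', add_div, div_div]
  refine ⟨tendsto_of_eventually_le_of_tendsto_lower lower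
    ((eventually_ge_atTop 1).mono upper) ?_, upper⟩
  filter_upwards [eventually_ge_atTop 1] with n hn
  filter_upwards [eventually_ge_atTop n] with w hw
  exact StripWalk.le_free_energy ha hc hn hw (hκ w (hn.trans hw))
end

section
/- Fix an integer w ≥ 3 and a real c > w − 1, and let a*_w = (c−1)(c−w+1)/(c+w−1) (which is positive). Then κ_w(a*_w, a*_w, c) = log(c−1). -/
open Filter
open scoped Classical

namespace AstarAux
noncomputable section

/-- Contact weight factor of a height. -/
def sfac (w : ℕ) (a : ℝ) (h : ℤ) : ℝ :=
  (if h = 0 then a else 1) * (if h = (w:ℤ) then a else 1)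

/-- The positive eigenvector of the transfer matrix at `a = b = a*`, eigenvalue `c - 1`. -/
def vf (w : ℕ) (c : ℝ) (h : ℤ) (d : Bool) : ℝ :=
  if d then (if h = (w:ℤ) then (c + w - 1)/(c - 1) else c + w + 1 - 2*h)
  else (if h = 0 then (c + w - 1)/(c - 1) else c - w + 1 + 2*h)

/-- Eigenvector-weighted partition function. -/
def Zv (w n : ℕ) (a c : ℝ) : ℝ :=
  ∑ σ ∈ Finset.univ.filter (fun σ : Fin n → Bool => IsWalk w n (extFun σ)),
    wt w n a a c (extFun σ) * vf w c (ht (extFun σ) n) (extFun σ (n-1))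

lemma ht_succ (σ : ℕ → Bool) (k : ℕ) : ht σ (k+1) = ht σ k + stepVal (σ k) :=
  Finset.sum_range_succ _ _

lemma ht_congr {σ₁ σ₂ : ℕ → Bool} (k : ℕ) (hagree : ∀ i < k, σ₁ i = σ₂ i) :
    ht σ₁ k = ht σ₂ k :=
  Finset.sum_congr rfl (fun i hi => by rw [hagree i (Finset.mem_range.1 hi)])

lemma extFun_snoc_lt {n : ℕ} (τ : Fin n → Bool) (b : Bool) {i : ℕ} (hi : i < n) :
    extFun (Fin.snoc τ b) i = extFun τ i := by
  simp [extFun, hi, Nat.lt_succ_of_lt hi, Fin.snoc, Fin.castLT]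

lemma extFun_snoc_self {n : ℕ} (τ : Fin n → Bool) (b : Bool) :
    extFun (Fin.snoc τ b) n = b := by
  simp [extFun, Fin.snoc]

lemma ht_snoc {n : ℕ} (τ : Fin n → Bool) (b : Bool) {k : ℕ} (hk : k ≤ n) :
    ht (extFun (Fin.snoc τ b)) k = ht (extFun τ) k :=
  ht_congr k (fun i hi => extFun_snoc_lt τ b (lt_of_lt_of_le hi hk))

lemma ht_snoc_succ {n : ℕ} (τ : Fin n → Bool) (b : Bool) :
    ht (extFun (Fin.snoc τ b)) (n+1) = ht (extFun τ) n + stepVal b := by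
  rw [ht_succ, ht_snoc τ b le_rfl, extFun_snoc_self]

lemma isWalk_snoc {w n : ℕ} (τ : Fin n → Bool) (b : Bool) :
    IsWalk w (n+1) (extFun (Fin.snoc τ b)) ↔
      IsWalk w n (extFun τ) ∧
        (0 ≤ ht (extFun τ) n + stepVal b ∧ ht (extFun τ) n + stepVal b ≤ (w:ℤ)) := by
  constructor
  · intro H
    refine ⟨fun k hk => ?_, ?_⟩
    · have := H k (Nat.le_succ_of_le hk)
      rwa [ht_snoc τ b hk] at this
    · have := H (n+1) le_rfl
      rwa [ht_snoc_succ] at this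
  · rintro ⟨H, H2⟩ k hk
    rcases Nat.lt_or_ge k (n+1) with hk' | hk'
    · rw [ht_snoc τ b (Nat.lt_succ_iff.1 hk')]
      exact H k (Nat.lt_succ_iff.1 hk')
    · have : k = n + 1 := le_antisymm hk hk'
      subst this
      rwa [ht_snoc_succ]

lemma ma_snoc {n : ℕ} (τ : Fin n → Bool) (b : Bool) :
    ma (n+1) (extFun (Fin.snoc τ b)) =
      ma n (extFun τ) + (if ht (extFun τ) n + stepVal b = 0 then 1 else 0) := by
  unfold ma
  have h1 : Finset.Icc 1 (n+1) = insert (n+1) (Finset.Icc 1 n) := by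
    ext k; simp [Finset.mem_Icc]; omega
  have h2 : (Finset.Icc 1 n).filter (fun k => ht (extFun (Fin.snoc τ b)) k = 0)
      = (Finset.Icc 1 n).filter (fun k => ht (extFun τ) k = 0) :=
    Finset.filter_congr (fun k hk => by rw [ht_snoc τ b (Finset.mem_Icc.1 hk).2])
  rw [h1, Finset.filter_insert, h2, ht_snoc_succ]
  split_ifs
  · rw [Finset.card_insert_of_notMem (by simp)]
  · rfl

lemma mb_snoc {w n : ℕ} (τ : Fin n → Bool) (b : Bool) :
    mb w (n+1) (extFun (Fin.snoc τ b)) =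
      mb w n (extFun τ) + (if ht (extFun τ) n + stepVal b = (w:ℤ) then 1 else 0) := by
  unfold mb
  have h1 : Finset.Icc 1 (n+1) = insert (n+1) (Finset.Icc 1 n) := by
    ext k; simp [Finset.mem_Icc]; omega
  have h2 : (Finset.Icc 1 n).filter (fun k => ht (extFun (Fin.snoc τ b)) k = (w:ℤ))
      = (Finset.Icc 1 n).filter (fun k => ht (extFun τ) k = (w:ℤ)) :=
    Finset.filter_congr (fun k hk => by rw [ht_snoc τ b (Finset.mem_Icc.1 hk).2])
  rw [h1, Finset.filter_insert, h2, ht_snoc_succ]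
  split_ifs
  · rw [Finset.card_insert_of_notMem (by simp)]
  · rfl

lemma mc_snoc {n : ℕ} (hn : 1 ≤ n) (τ : Fin n → Bool) (b : Bool) :
    mc (n+1) (extFun (Fin.snoc τ b)) =
      mc n (extFun τ) + (if extFun τ (n-1) = b then 1 else 0) := by
  unfold mc
  obtain ⟨m, rfl⟩ : ∃ m, n = m + 1 := ⟨n - 1, by omega⟩
  simp only [Nat.add_sub_cancel]
  have h2 : (Finset.range m).filter
        (fun i => extFun (Fin.snoc τ b) i = extFun (Fin.snoc τ b) (i+1))
      = (Finset.range m).filter (fun i => extFun τ i = extFun τ (i+1)) :=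
    Finset.filter_congr (fun i hi => by
      have hi' := Finset.mem_range.1 hi
      rw [extFun_snoc_lt τ b (by omega), extFun_snoc_lt τ b (by omega)])
  rw [Finset.range_add_one, Finset.filter_insert, h2,
    extFun_snoc_lt τ b (by omega), extFun_snoc_self]
  split_ifs
  · rw [Finset.card_insert_of_notMem (by simp)]
  · rfl

lemma wt_snoc {w n : ℕ} (hn : 1 ≤ n) (τ : Fin n → Bool) (b : Bool) (a c : ℝ) :
    wt w (n+1) a a c (extFun (Fin.snoc τ b)) =
      wt w n a a c (extFun τ) *
        ((if extFun τ (n-1) = b then c else 1) *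
          sfac w a (ht (extFun τ) n + stepVal b)) := by
  unfold wt sfac
  rw [ma_snoc, mb_snoc, mc_snoc hn, pow_add, pow_add, pow_add]
  split_ifs <;> simp <;> ring

lemma eigen {w : ℕ} (hw : 3 ≤ w) {c : ℝ} (hc : (w:ℝ) - 1 < c) (h : ℤ)
    (h0 : 0 ≤ h) (h1 : h ≤ (w:ℤ)) (d : Bool)
    (hdu : d = true → 1 ≤ h) (hdd : d = false → h ≤ (w:ℤ) - 1) :
    ∑ b : Bool, (if (0 ≤ h + stepVal b ∧ h + stepVal b ≤ (w:ℤ)) then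
        (if d = b then c else 1) * sfac w ((c - 1) * (c - ↑w + 1) / (c + ↑w - 1)) (h + stepVal b) *
          vf w c (h + stepVal b) b
      else 0)
    = (c - 1) * vf w c h d := by
  have hw3 : (3:ℝ) ≤ (w:ℝ) := by exact_mod_cast hw
  have hc1 : (1:ℝ) < c := by linarith
  have hc1' : c - 1 ≠ 0 := by linarith
  have hcw' : c + (w:ℝ) - 1 ≠ 0 := by linarith
  rw [Fintype.sum_bool]
  simp only [stepVal, if_true, if_false, sfac, vf,
    show ((true:Bool) = true) = True from eq_true rfl,
    show ((false:Bool) = false) = True from eq_true rfl,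
    show ((false:Bool) = true) = False from eq_false (by simp),
    show ((true:Bool) = false) = False from eq_false (by simp)]
  by_cases e0 : h = 0
  · subst e0
    have hd2 : d = false := by
      cases d
      · rfl
      · exact absurd (hdu rfl) (by omega)
    subst hd2
    simp only [eq_false (show ¬((0:ℤ) + 1 = 0) by omega),
      eq_true (show ((0:ℤ) ≤ 0 + 1) by omega),
      eq_false (show ¬((0:ℤ) + 1 = (w:ℤ)) by omega),
      eq_true (show ((0:ℤ) + 1 ≤ (w:ℤ)) by omega),
      eq_false (show ¬((0:ℤ) ≤ 0 + -1) by omega),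
      eq_true (show ((0:ℤ) = 0) from rfl),
      if_true, if_false, and_true, true_and, and_false, false_and]
    push_cast; field_simp; ring
  · by_cases ew : h = (w:ℤ)
    · subst ew
      have hd2 : d = true := by
        cases d
        · exact absurd (hdd rfl) (by omega)
        · rfl
      subst hd2
      simp only [eq_false (show ¬((w:ℤ) + 1 ≤ (w:ℤ)) by omega),
        eq_true (show ((0:ℤ) ≤ (w:ℤ) + -1) by omega),
        eq_true (show ((w:ℤ) + -1 ≤ (w:ℤ)) by omega),
        eq_false (show ¬((w:ℤ) + -1 = 0) by omega),
        eq_false (show ¬((w:ℤ) + -1 = (w:ℤ)) by omega),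
        eq_true (show ((w:ℤ) = (w:ℤ)) from rfl),
        if_true, if_false, and_true, true_and, and_false, false_and]
      push_cast; field_simp; ring
    · by_cases e1 : h = 1
      · subst e1
        simp only [eq_false (show ¬((1:ℤ) + 1 = 0) by omega),
          eq_true (show ((0:ℤ) ≤ 1 + 1) by omega),
          eq_false (show ¬((1:ℤ) + 1 = (w:ℤ)) by omega),
          eq_true (show ((1:ℤ) + 1 ≤ (w:ℤ)) by omega),
          eq_true (show ((0:ℤ) ≤ 1 + -1) by omega),
          eq_true (show ((1:ℤ) + -1 ≤ (w:ℤ)) by omega),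
          eq_true (show ((1:ℤ) + -1 = 0) by omega),
          eq_false (show ¬((1:ℤ) + -1 = (w:ℤ)) by omega),
          eq_false (show ¬((1:ℤ) = (w:ℤ)) by omega),
          eq_false (show ¬((1:ℤ) = 0) by omega),
          if_true, if_false, and_true, true_and, and_false, false_and]
        cases d <;> simp only [if_true, if_false] <;> push_cast <;> field_simp <;> ring
      · by_cases ew1 : h = (w:ℤ) - 1
        · subst ew1
          simp only [eq_false (show ¬((w:ℤ) - 1 + 1 = 0) by omega),
            eq_true (show ((0:ℤ) ≤ (w:ℤ) - 1 + 1) by omega),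
            eq_true (show ((w:ℤ) - 1 + 1 = (w:ℤ)) by omega),
            eq_true (show ((w:ℤ) - 1 + 1 ≤ (w:ℤ)) by omega),
            eq_true (show ((0:ℤ) ≤ (w:ℤ) - 1 + -1) by omega),
            eq_true (show ((w:ℤ) - 1 + -1 ≤ (w:ℤ)) by omega),
            eq_false (show ¬((w:ℤ) - 1 + -1 = 0) by omega),
            eq_false (show ¬((w:ℤ) - 1 + -1 = (w:ℤ)) by omega),
            eq_false (show ¬((w:ℤ) - 1 = (w:ℤ)) by omega),
            eq_false (show ¬((w:ℤ) - 1 = 0) by omega),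
            if_true, if_false, and_true, true_and, and_false, false_and]
          cases d <;> simp only [if_true, if_false] <;> push_cast <;> field_simp <;> ring
        · simp only [eq_false (show ¬(h + 1 = 0) by omega),
            eq_true (show ((0:ℤ) ≤ h + 1) by omega),
            eq_false (show ¬(h + 1 = (w:ℤ)) by omega),
            eq_true (show (h + 1 ≤ (w:ℤ)) by omega),
            eq_true (show ((0:ℤ) ≤ h + -1) by omega),
            eq_true (show (h + -1 ≤ (w:ℤ)) by omega),
            eq_false (show ¬(h + -1 = 0) by omega),
            eq_false (show ¬(h + -1 = (w:ℤ)) by omega),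
            eq_false (show ¬(h = (w:ℤ)) from ew),
            eq_false (show ¬(h = 0) from e0),
            if_true, if_false, and_true, true_and, and_false, false_and]
          cases d <;> simp only [if_true, if_false] <;> push_cast <;> ring

lemma Zv_step {w : ℕ} (hw : 3 ≤ w) {c : ℝ} (hc : (w:ℝ) - 1 < c) {n : ℕ} (hn : 1 ≤ n) :
    Zv w (n+1) ((c-1)*(c-(w:ℝ)+1)/(c+(w:ℝ)-1)) c
      = (c - 1) * Zv w n ((c-1)*(c-(w:ℝ)+1)/(c+(w:ℝ)-1)) c := by
  set a : ℝ := (c-1)*(c-(w:ℝ)+1)/(c+(w:ℝ)-1) with ha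
  unfold Zv
  rw [Finset.sum_filter, Finset.sum_filter]
  rw [← Equiv.sum_comp (Fin.snocEquiv (fun _ : Fin (n+1) => Bool))]
  rw [Fintype.sum_prod_type]
  rw [Finset.mul_sum]
  rw [Finset.sum_comm]
  refine Finset.sum_congr rfl (fun τ _ => ?_)
  have key : ∀ b : Bool,
      ((Fin.snocEquiv (fun _ : Fin (n+1) => Bool)) (b, τ) : Fin (n+1) → Bool) = Fin.snoc τ b :=
    fun b => rfl
  have step : ∀ b : Bool,
      (if IsWalk w (n+1) (extFun (Fin.snoc τ b))
        then wt w (n+1) a a c (extFun (Fin.snoc τ b)) *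
          vf w c (ht (extFun (Fin.snoc τ b)) (n+1)) (extFun (Fin.snoc τ b) (n+1-1))
        else 0)
      = (if IsWalk w n (extFun τ) then
          wt w n a a c (extFun τ) *
            (if 0 ≤ ht (extFun τ) n + stepVal b ∧ ht (extFun τ) n + stepVal b ≤ (w:ℤ) then
              (if extFun τ (n-1) = b then c else 1) * sfac w a (ht (extFun τ) n + stepVal b) *
                vf w c (ht (extFun τ) n + stepVal b) b
            else 0)
        else 0) := by
    intro b
    by_cases hP : IsWalk w n (extFun τ)
    · simp only [hP, if_true]
      by_cases hB : 0 ≤ ht (extFun τ) n + stepVal b ∧ ht (extFun τ) n + stepVal b ≤ (w:ℤ)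
      · rw [if_pos ((isWalk_snoc τ b).2 ⟨hP, hB⟩), if_pos hB]
        rw [wt_snoc hn, ht_snoc_succ, show n+1-1 = n from rfl, extFun_snoc_self]
        ring
      · rw [if_neg (fun H => hB ((isWalk_snoc τ b).1 H).2), if_neg hB, mul_zero]
    · rw [if_neg (fun H => hP ((isWalk_snoc τ b).1 H).1), if_neg hP]
  calc ∑ b : Bool,
        (if IsWalk w (n+1) (extFun ((Fin.snocEquiv (fun _ : Fin (n+1) => Bool)) (b, τ)))
          then wt w (n+1) a a c (extFun ((Fin.snocEquiv (fun _ : Fin (n+1) => Bool)) (b, τ))) *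
            vf w c (ht (extFun ((Fin.snocEquiv (fun _ : Fin (n+1) => Bool)) (b, τ))) (n+1))
              (extFun ((Fin.snocEquiv (fun _ : Fin (n+1) => Bool)) (b, τ)) (n+1-1))
          else 0)
      = ∑ b : Bool,
        (if IsWalk w n (extFun τ) then
          wt w n a a c (extFun τ) *
            (if 0 ≤ ht (extFun τ) n + stepVal b ∧ ht (extFun τ) n + stepVal b ≤ (w:ℤ) then
              (if extFun τ (n-1) = b then c else 1) * sfac w a (ht (extFun τ) n + stepVal b) *
                vf w c (ht (extFun τ) n + stepVal b) b
            else 0)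
        else 0) := by
        refine Finset.sum_congr rfl (fun b _ => ?_)
        rw [key b]; exact step b
    _ = (c - 1) *
        (if IsWalk w n (extFun τ) then
          wt w n a a c (extFun τ) * vf w c (ht (extFun τ) n) (extFun τ (n-1)) else 0) := by
        by_cases hP : IsWalk w n (extFun τ)
        · simp only [hP, if_true]
          rw [← Finset.mul_sum]
          have h0 : 0 ≤ ht (extFun τ) n := (hP n le_rfl).1
          have h1 : ht (extFun τ) n ≤ (w:ℤ) := (hP n le_rfl).2
          have hsp : ht (extFun τ) ((n-1)+1) = ht (extFun τ) (n-1)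
              + stepVal (extFun τ (n-1)) := ht_succ _ _
          rw [show (n-1)+1 = n by omega] at hsp
          have hprev := hP (n-1) (by omega)
          have hdu : extFun τ (n-1) = true → 1 ≤ ht (extFun τ) n := by
            intro hd
            rw [hsp, hd]
            have : stepVal true = 1 := rfl
            omega
          have hdd : extFun τ (n-1) = false → ht (extFun τ) n ≤ (w:ℤ) - 1 := by
            intro hd
            rw [hsp, hd]
            have : stepVal false = -1 := rfl
            omega
          rw [eigen hw hc (ht (extFun τ) n) h0 h1 (extFun τ (n-1)) hdu hdd]
          ring
        · simp [hP]

lemma Zv_one {w : ℕ} (hw : 3 ≤ w) (a c : ℝ) : Zv w 1 a c = c + w - 1 := by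
  unfold Zv
  rw [Finset.sum_filter]
  rw [← Equiv.sum_comp (Equiv.funUnique (Fin 1) Bool).symm]
  rw [Fintype.sum_bool]
  have hup : ∀ i : ℕ, extFun ((Equiv.funUnique (Fin 1) Bool).symm true) i
      = if i < 1 then true else false := fun i => by
    simp [extFun, Equiv.funUnique]
  have hdn : ∀ i : ℕ, extFun ((Equiv.funUnique (Fin 1) Bool).symm false) i
      = if i < 1 then false else false := fun i => by
    simp [extFun, Equiv.funUnique]
  have hhtup : ht (extFun ((Equiv.funUnique (Fin 1) Bool).symm true)) 1 = 1 := by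
    rw [ht_succ, show extFun ((Equiv.funUnique (Fin 1) Bool).symm true) 0 = true from rfl]
    simp [ht, stepVal]
  have hhtdn : ht (extFun ((Equiv.funUnique (Fin 1) Bool).symm false)) 1 = -1 := by
    rw [ht_succ, show extFun ((Equiv.funUnique (Fin 1) Bool).symm false) 0 = false from rfl]
    simp [ht, stepVal]
  have hwalkup : IsWalk w 1 (extFun ((Equiv.funUnique (Fin 1) Bool).symm true)) := by
    intro k hk
    interval_cases k
    · simp [ht]
    · rw [hhtup]; constructor <;> omega
  have hwalkdn : ¬ IsWalk w 1 (extFun ((Equiv.funUnique (Fin 1) Bool).symm false)) := by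
    intro H
    have := (H 1 le_rfl).1
    rw [hhtdn] at this
    omega
  rw [if_pos hwalkup, if_neg hwalkdn, add_zero]
  have hma : ma 1 (extFun ((Equiv.funUnique (Fin 1) Bool).symm true)) = 0 := by
    unfold ma
    rw [Finset.card_eq_zero, Finset.filter_eq_empty_iff]
    intro k hk
    rw [Finset.mem_Icc] at hk
    have hk1 : k = 1 := by omega
    subst hk1
    rw [hhtup]; omega
  have hmb : mb w 1 (extFun ((Equiv.funUnique (Fin 1) Bool).symm true)) = 0 := by
    unfold mb
    rw [Finset.card_eq_zero, Finset.filter_eq_empty_iff]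
    intro k hk
    rw [Finset.mem_Icc] at hk
    have hk1 : k = 1 := by omega
    subst hk1
    rw [hhtup]; omega
  have hmc : mc 1 (extFun ((Equiv.funUnique (Fin 1) Bool).symm true)) = 0 := by
    unfold mc
    simp
  rw [wt, hma, hmb, hmc, hhtup]
  have h1w : (1:ℤ) ≠ (w:ℤ) := by omega
  rw [show extFun ((Equiv.funUnique (Fin 1) Bool).symm true) (1-1) = true from rfl]
  simp [vf, h1w]
  ring

lemma Zv_closed {w : ℕ} (hw : 3 ≤ w) {c : ℝ} (hc : (w:ℝ) - 1 < c) :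
    ∀ n : ℕ, 1 ≤ n →
      Zv w n ((c-1)*(c-(w:ℝ)+1)/(c+(w:ℝ)-1)) c = (c-1)^(n-1) * (c + w - 1) := by
  intro n
  induction n with
  | zero => omega
  | succ m ih =>
    intro _
    rcases Nat.eq_or_lt_of_le (Nat.zero_le m) with hm | hm
    · rw [← hm]
      simpa using Zv_one hw _ c
    · have hm1 : 1 ≤ m := hm
      rw [Zv_step hw hc hm1, ih hm1]
      rw [show m + 1 - 1 = (m-1) + 1 by omega, pow_succ]
      ring

lemma vf_le {w : ℕ} (hw : 3 ≤ w) {c : ℝ} (hc : (w:ℝ) - 1 < c) {h : ℤ}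
    (h0 : 0 ≤ h) (h1 : h ≤ (w:ℤ)) (d : Bool) :
    vf w c h d ≤ c + w + 1 := by
  have hw3 : (3:ℝ) ≤ (w:ℝ) := by exact_mod_cast hw
  have hc2 : (2:ℝ) < c := by linarith
  have hr0 : (0:ℝ) ≤ (h:ℝ) := by exact_mod_cast h0
  have hr1 : (h:ℝ) ≤ (w:ℝ) := by exact_mod_cast h1
  have htle : (c + w - 1)/(c - 1) ≤ c + w + 1 := by
    rw [div_le_iff₀ (by linarith)]
    nlinarith
  unfold vf
  split_ifs <;> linarith

lemma le_vf {w : ℕ} (hw : 3 ≤ w) {c : ℝ} (hc : (w:ℝ) - 1 < c) {h : ℤ}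
    (h0 : 0 ≤ h) (h1 : h ≤ (w:ℤ)) (d : Bool) :
    min (c - w + 1) ((c + w - 1)/(c - 1)) ≤ vf w c h d := by
  have hw3 : (3:ℝ) ≤ (w:ℝ) := by exact_mod_cast hw
  have hr0 : (0:ℝ) ≤ (h:ℝ) := by exact_mod_cast h0
  have hr1 : (h:ℝ) ≤ (w:ℝ) := by exact_mod_cast h1
  unfold vf
  split_ifs
  all_goals first
    | exact min_le_right _ _
    | (refine le_trans (min_le_left _ _) ?_; linarith)

lemma wt_nonneg {w n : ℕ} {a c : ℝ} (ha : 0 ≤ a) (hc : 0 ≤ c) (σ : ℕ → Bool) :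
    0 ≤ wt w n a a c σ := by
  unfold wt; positivity

lemma Zv_le_Z {w n : ℕ} (hw : 3 ≤ w) {c : ℝ} (hc : (w:ℝ) - 1 < c) {a : ℝ}
    (ha : 0 ≤ a) :
    Zv w n a c ≤ (c + w + 1) * Z w n a a c := by
  have hc0 : (0:ℝ) ≤ c := by
    have hw3 : (3:ℝ) ≤ (w:ℝ) := by exact_mod_cast hw
    linarith
  unfold Zv Z
  rw [Finset.mul_sum]
  refine Finset.sum_le_sum (fun σ hσ => ?_)
  have hW : IsWalk w n (extFun σ) := (Finset.mem_filter.1 hσ).2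
  have hvf := vf_le hw hc (hW n le_rfl).1 (hW n le_rfl).2 (extFun σ (n-1))
  calc wt w n a a c (extFun σ) * vf w c (ht (extFun σ) n) (extFun σ (n-1))
      ≤ wt w n a a c (extFun σ) * (c + w + 1) :=
        mul_le_mul_of_nonneg_left hvf (wt_nonneg ha hc0 _)
    _ = (c + w + 1) * wt w n a a c (extFun σ) := mul_comm _ _

lemma Z_le_Zv {w n : ℕ} (hw : 3 ≤ w) {c : ℝ} (hc : (w:ℝ) - 1 < c) {a : ℝ}
    (ha : 0 ≤ a) :
    min (c - w + 1) ((c + w - 1)/(c - 1)) * Z w n a a c ≤ Zv w n a c := by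
  have hc0 : (0:ℝ) ≤ c := by
    have hw3 : (3:ℝ) ≤ (w:ℝ) := by exact_mod_cast hw
    linarith
  unfold Zv Z
  rw [Finset.mul_sum]
  refine Finset.sum_le_sum (fun σ hσ => ?_)
  have hW : IsWalk w n (extFun σ) := (Finset.mem_filter.1 hσ).2
  have hvf := le_vf hw hc (hW n le_rfl).1 (hW n le_rfl).2 (extFun σ (n-1))
  calc min (c - w + 1) ((c + w - 1)/(c - 1)) * wt w n a a c (extFun σ)
      = wt w n a a c (extFun σ) * min (c - w + 1) ((c + w - 1)/(c - 1)) := mul_comm _ _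
    _ ≤ wt w n a a c (extFun σ) * vf w c (ht (extFun σ) n) (extFun σ (n-1)) :=
        mul_le_mul_of_nonneg_left hvf (wt_nonneg ha hc0 _)

lemma aux_lim (L C : ℝ) :
    Tendsto (fun n : ℕ => (((n:ℝ)-1)*L + C)/(n:ℝ)) atTop (nhds L) := by
  have h1 : Tendsto (fun n : ℕ => (1:ℝ)/(n:ℝ)) atTop (nhds 0) :=
    tendsto_one_div_atTop_nhds_zero_nat
  have h2 : Tendsto (fun n : ℕ => L - L*((1:ℝ)/(n:ℝ)) + C*((1:ℝ)/(n:ℝ))) atTop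
      (nhds (L - L*0 + C*0)) :=
    (tendsto_const_nhds.sub (h1.const_mul L)).add (h1.const_mul C)
  rw [show L - L*0 + C*0 = L by ring] at h2
  refine h2.congr' ?_
  filter_upwards [eventually_ge_atTop 1] with n hn
  have hn0 : (0:ℝ) < (n:ℝ) := by exact_mod_cast hn
  field_simp

end
end AstarAux

open AstarAux in
/-- for `c > w − 1` and `a*_w = (c−1)(c−w+1)/(c+w−1) > 0`, the free energy at
`a = b = a*_w` equals `log(c−1)`. -/
theorem symmetric_astar_curve (w : ℕ) (hw : 3 ≤ w) (c : ℝ) (hc : (w : ℝ) - 1 < c) (κ : ℝ)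
    (hκ : Tendsto (fun n : ℕ =>
        Real.log (Z w n ((c - 1) * (c - w + 1) / (c + w - 1))
          ((c - 1) * (c - w + 1) / (c + w - 1)) c) / (n : ℝ)) atTop (nhds κ)) :
    0 < (c - 1) * (c - w + 1) / (c + w - 1) ∧ κ = Real.log (c - 1) := by
  have hw3 : (3:ℝ) ≤ (w:ℝ) := by exact_mod_cast hw
  have hc1 : (1:ℝ) < c := by linarith
  set a : ℝ := (c - 1) * (c - ↑w + 1) / (c + ↑w - 1) with ha
  have hapos : 0 < a :=
    div_pos (mul_pos (by linarith) (by linarith)) (by linarith)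
  refine ⟨hapos, ?_⟩
  set m : ℝ := min (c - (w:ℝ) + 1) ((c + (w:ℝ) - 1)/(c - 1)) with hm
  have hmpos : 0 < m := lt_min (by linarith) (div_pos (by linarith) (by linarith))
  have hMpos : (0:ℝ) < c + (w:ℝ) + 1 := by linarith
  have hcwpos : (0:ℝ) < c + (w:ℝ) - 1 := by linarith
  have hZv : ∀ n : ℕ, 1 ≤ n → Zv w n a c = (c-1)^(n-1) * (c + (w:ℝ) - 1) :=
    Zv_closed hw hc
  have hlow : ∀ n : ℕ, 1 ≤ n →
      (c-1)^(n-1) * (c + (w:ℝ) - 1) / (c + (w:ℝ) + 1) ≤ Z w n a a c := by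
    intro n hn
    rw [div_le_iff₀ hMpos, ← hZv n hn, mul_comm]
    exact Zv_le_Z hw hc (le_of_lt hapos)
  have hup : ∀ n : ℕ, 1 ≤ n →
      Z w n a a c ≤ (c-1)^(n-1) * (c + (w:ℝ) - 1) / m := by
    intro n hn
    rw [le_div_iff₀ hmpos, ← hZv n hn, mul_comm]
    exact Z_le_Zv hw hc (le_of_lt hapos)
  have hnumpos : ∀ n : ℕ, 0 < (c-1)^(n-1) * (c + (w:ℝ) - 1) := fun n =>
    mul_pos (pow_pos (by linarith) _) hcwpos
  have hZpos : ∀ n : ℕ, 1 ≤ n → 0 < Z w n a a c := fun n hn =>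
    lt_of_lt_of_le (div_pos (hnumpos n) hMpos) (hlow n hn)
  set L : ℝ := Real.log (c - 1) with hL
  have hnum : ∀ n : ℕ, 1 ≤ n → ∀ x : ℝ, 0 < x →
      Real.log ((c-1)^(n-1) * (c + (w:ℝ) - 1) / x)
        = ((n:ℝ)-1)*L + (Real.log (c + (w:ℝ) - 1) - Real.log x) := by
    intro n hn x hx
    rw [Real.log_div (ne_of_gt (hnumpos n)) (ne_of_gt hx),
      Real.log_mul (ne_of_gt (pow_pos (show (0:ℝ) < c - 1 by linarith) _)) (ne_of_gt hcwpos),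
      Real.log_pow]
    rw [show ((n-1 : ℕ):ℝ) = (n:ℝ) - 1 by
      rw [Nat.cast_sub hn]; norm_num]
    ring
  have lim1 := aux_lim L (Real.log (c + (w:ℝ) - 1) - Real.log (c + (w:ℝ) + 1))
  have lim2 := aux_lim L (Real.log (c + (w:ℝ) - 1) - Real.log m)
  have hsq : Tendsto (fun n : ℕ => Real.log (Z w n a a c) / (n : ℝ)) atTop (nhds L) := by
    refine tendsto_of_tendsto_of_tendsto_of_le_of_le' lim1 lim2 ?_ ?_
    · filter_upwards [eventually_ge_atTop 1] with n hn
      have hn0 : (0:ℝ) < (n:ℝ) := by exact_mod_cast hn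
      rw [← hnum n hn _ hMpos]
      apply div_le_div_of_nonneg_right ?_ hn0.le
      exact Real.log_le_log (div_pos (hnumpos n) hMpos) (hlow n hn)
    · filter_upwards [eventually_ge_atTop 1] with n hn
      have hn0 : (0:ℝ) < (n:ℝ) := by exact_mod_cast hn
      rw [← hnum n hn _ hmpos]
      apply div_le_div_of_nonneg_right ?_ hn0.le
      exact Real.log_le_log (hZpos n hn) (hup n hn)
  exact tendsto_nhds_unique hκ hsq
end
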